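/- arXiv:1610.06793 — 5 statements merged into one kernel-verified Lean document; each statement's English description precedes it below -/
import Mathlib

section
/- If k(t) = (σβc₀)/(σπ + δ(σ-β) - (πσ-ρ)β) e^(-((ρ-δ)/σ)t) + a₁ e^(-((πβ-π-δ)/β)t) with a₁ ∈ ℝ, and λ(t) = c₀^(-σ) e^((ρ-δ)t), then e^(-ρt) λ(t) k(t) → 0 as t → ∞ if and only if a₁ = 0, given δ < ρ + δσ and (δ+π-πβ)/β > 0. -/
open Real Filter

lemma exp_mul_tendsto_zero {c : ℝ} (hc : c < 0) :
    Tendsto (fun t : ℝ => Real.exp (c * t)) atTop (nhds 0) :=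
  Real.tendsto_exp_atBot.comp ((tendsto_const_mul_atBot_of_neg hc).mpr tendsto_id)

/-- transversality condition for physical capital holds iff a₁ = 0. -/
theorem stmt4 (σ β δ ρ pr c₀ a₁ : ℝ)
    (hσ : 0 < σ) (hβ : 0 < β) (hβ1 : β < 1) (hδ : 0 < δ) (hρ : 0 < ρ) (hpr : 0 ≤ pr)
    (hc₀ : 0 < c₀)
    (htrans : δ < ρ + δ * σ)
    (hx : 0 < (δ + pr - pr * β)/β)
    (hne : σ * pr + δ * (σ - β) - (pr * σ - ρ) * β ≠ 0)
    (k lam : ℝ → ℝ)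
    (hk : ∀ t, k t = (σ * β * c₀)/(σ * pr + δ * (σ - β) - (pr * σ - ρ) * β) *
        Real.exp (-((ρ - δ)/σ) * t) + a₁ * Real.exp (-((pr * β - pr - δ)/β) * t))
    (hlam : ∀ t, lam t = c₀ ^ (-σ) * Real.exp ((ρ - δ) * t)) :
    Tendsto (fun t => Real.exp (-ρ * t) * lam t * k t) atTop (nhds 0) ↔ a₁ = 0 := by
  set A : ℝ := (σ * β * c₀)/(σ * pr + δ * (σ - β) - (pr * σ - ρ) * β) with hA
  set r1 : ℝ := -δ - (ρ - δ)/σ with hr1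
  set r2 : ℝ := -δ - (pr * β - pr - δ)/β with hr2
  have hc₀σ : (0:ℝ) < c₀ ^ (-σ) := Real.rpow_pos_of_pos hc₀ _
  have hr1neg : r1 < 0 := by
    rw [hr1, sub_neg, lt_div_iff₀ hσ]
    nlinarith
  have hr2pos : 0 < r2 := by
    have : r2 = (1 - β) * (δ + pr) / β := by
      rw [hr2]; field_simp; ring
    rw [this]
    exact div_pos (mul_pos (by linarith) (by linarith)) hβ
  have key : ∀ t, Real.exp (-ρ * t) * lam t * k t
      = (c₀ ^ (-σ) * A) * Real.exp (r1 * t) + (c₀ ^ (-σ) * a₁) * Real.exp (r2 * t) := by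
    intro t
    have h1 : Real.exp (r1 * t)
        = Real.exp (-ρ * t) * Real.exp ((ρ - δ) * t) * Real.exp (-((ρ - δ)/σ) * t) := by
      rw [← Real.exp_add, ← Real.exp_add]; congr 1; rw [hr1]; ring
    have h2 : Real.exp (r2 * t)
        = Real.exp (-ρ * t) * Real.exp ((ρ - δ) * t) * Real.exp (-((pr * β - pr - δ)/β) * t) := by
      rw [← Real.exp_add, ← Real.exp_add]; congr 1; rw [hr2]; ring
    rw [hk, hlam, h1, h2]; ring
  constructor
  · intro h
    have h' : Tendsto (fun t => (c₀ ^ (-σ) * A) * Real.exp (r1 * t)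
        + (c₀ ^ (-σ) * a₁) * Real.exp (r2 * t)) atTop (nhds 0) :=
      h.congr (fun t => key t)
    have h1 : Tendsto (fun t => (c₀ ^ (-σ) * A) * Real.exp (r1 * t)) atTop (nhds 0) := by
      simpa using (exp_mul_tendsto_zero hr1neg).const_mul (c₀ ^ (-σ) * A)
    have h2 : Tendsto (fun t => (c₀ ^ (-σ) * a₁) * Real.exp (r2 * t)) atTop (nhds 0) := by
      simpa using h'.sub h1
    have h3 : Tendsto (fun t => ((c₀ ^ (-σ) * a₁) * Real.exp (r2 * t)) * Real.exp (-r2 * t))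
        atTop (nhds 0) := by
      simpa using h2.mul (exp_mul_tendsto_zero (by linarith : -r2 < 0))
    have h4 : (fun t : ℝ => ((c₀ ^ (-σ) * a₁) * Real.exp (r2 * t)) * Real.exp (-r2 * t))
        = fun _ => c₀ ^ (-σ) * a₁ := by
      funext t
      rw [mul_assoc, ← Real.exp_add]
      simp [neg_mul]
    rw [h4] at h3
    have := tendsto_nhds_unique h3 tendsto_const_nhds
    have := mul_eq_zero.mp this.symm
    rcases this with h | h
    · exact absurd h (ne_of_gt hc₀σ)
    · exact h
  · intro h
    subst h
    have : Tendsto (fun t => (c₀ ^ (-σ) * A) * Real.exp (r1 * t)) atTop (nhds 0) := by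
      simpa using (exp_mul_tendsto_zero hr1neg).const_mul (c₀ ^ (-σ) * A)
    refine this.congr fun t => ?_
    rw [key t]; ring
end

section
/- Suppose c(t) = c₀ e^(-((ρ-δ)/σ)t), k(t) = k₀ e^(-((ρ-δ)/σ)t), h(t) = h₀ e^(-((ρ-δ)/σ)t), u(t) = u* := (ρ-δ+δσ)/(δσ), with positive constants satisfying c₀/k₀ = (δ+π(1-β))/β - (δ-ρ)/σ and h₀ = z* k₀/u* where z* = ((δ+π)/(βγ))^(1/(1-β)). Then these functions satisfy k'(t) = γ k(t)^β (u(t)h(t))^(1-β) - πk(t) - c(t) and h'(t) = δ(1-u(t))h(t) for all t. -/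
open Real

/-- the balanced growth path satisfies the state equations. -/
theorem stmt5 (β γ δ ρ pr σ c₀ k₀ h₀ ustar zstar : ℝ)
    (hβ : 0 < β) (hβ1 : β < 1) (hγ : 0 < γ) (hδ : 0 < δ) (hρ : 0 < ρ) (hpr : 0 ≤ pr)
    (hσ : 0 < σ) (hbgp : 0 < ρ - δ + δ * σ)
    (hk₀ : 0 < k₀) (hc₀ : 0 < c₀) (hh₀ : 0 < h₀)
    (hustar : ustar = (ρ - δ + δ * σ)/(δ * σ))
    (hzstar : zstar = ((δ + pr)/(β * γ)) ^ (1/(1 - β)))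
    (hck : c₀ / k₀ = (δ + pr * (1 - β))/β - (δ - ρ)/σ)
    (hh0 : h₀ = zstar * k₀ / ustar)
    (c k h u : ℝ → ℝ)
    (hc : ∀ t, c t = c₀ * Real.exp (-((ρ - δ)/σ) * t))
    (hk : ∀ t, k t = k₀ * Real.exp (-((ρ - δ)/σ) * t))
    (hh : ∀ t, h t = h₀ * Real.exp (-((ρ - δ)/σ) * t))
    (hu : ∀ t, u t = ustar) :
    (∀ t, HasDerivAt k (γ * (k t) ^ β * (u t * h t) ^ (1 - β) - pr * k t - c t) t)
      ∧ (∀ t, HasDerivAt h (δ * (1 - u t) * h t) t) := by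
  have hβ1' : (1 : ℝ) - β ≠ 0 := by nlinarith
  set a : ℝ := -((ρ - δ)/σ) with ha
  have hkfun : k = fun t => k₀ * Real.exp (a * t) := funext hk
  have hhfun : h = fun t => h₀ * Real.exp (a * t) := funext hh
  have hustar_pos : 0 < ustar := by
    rw [hustar]; positivity
  have hbase : 0 < (δ + pr)/(β * γ) := by positivity
  have hz_pos : 0 < zstar := by rw [hzstar]; positivity
  have hzpow : zstar ^ (1 - β) = (δ + pr)/(β * γ) := by
    rw [hzstar, ← Real.rpow_mul hbase.le, one_div, inv_mul_cancel₀ hβ1', Real.rpow_one]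
  -- derivative of exponential forms
  have hderiv : ∀ (A : ℝ) (t : ℝ),
      HasDerivAt (fun t => A * Real.exp (a * t)) (a * (A * Real.exp (a * t))) t := by
    intro A t
    have h1 : HasDerivAt (fun t : ℝ => a * t) a t := by
      simpa using (hasDerivAt_id t).const_mul a
    have h2 := (h1.exp).const_mul A
    exact h2.congr_deriv (by ring)
  constructor
  · intro t
    have hkt : k t = k₀ * Real.exp (a * t) := hk t
    have hkt_pos : 0 < k t := by rw [hkt]; positivity
    have huh : u t * h t = zstar * k t := by
      rw [hu t, hh t, hkt, hh0]
      field_simp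
    have hpow : γ * (k t) ^ β * (u t * h t) ^ (1 - β)
        = (δ + pr)/β * k t := by
      rw [huh, Real.mul_rpow hz_pos.le hkt_pos.le, hzpow]
      have : (k t) ^ β * (k t) ^ (1 - β) = k t := by
        rw [← Real.rpow_add hkt_pos]; simp
      field_simp
      linear_combination this
    have hct : c t = c₀ * Real.exp (a * t) := hc t
    have hc0 : c₀ = ((δ + pr * (1 - β))/β - (δ - ρ)/σ) * k₀ := by
      field_simp at hck
      field_simp
      nlinarith [hck]
    have hval : γ * (k t) ^ β * (u t * h t) ^ (1 - β) - pr * k t - c t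
        = a * (k₀ * Real.exp (a * t)) := by
      rw [hpow, hct, hc0, hkt, ha]
      field_simp
      ring
    rw [hval, hkfun]
    exact hderiv k₀ t
  · intro t
    have hval : δ * (1 - u t) * h t = a * (h₀ * Real.exp (a * t)) := by
      rw [hu t, hh t, hustar, ha]
      field_simp
      ring
    rw [hval, hhfun]
    exact hderiv h₀ t
end

section
/- If h(t) = [ a₂((δ-ρ-δσ)/σ) e^(-((δ-ρ-δσ)/σ)t) - δ ] / ((δ-ρ-δσ)/σ) · z* k₀ e^(-((ρ-δ)/σ)t) and μ(t) = c₁ e^((ρ-δ)t), with δ < ρ + δσ, then e^(-ρt) μ(t) h(t) → 0 as t → ∞ if and only if a₂ = 0. -/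
open Real Filter

/-- transversality condition for human capital holds iff a₂ = 0. -/
theorem stmt8 (δ ρ σ zstar k₀ c₁ a₂ : ℝ)
    (hδ : 0 < δ) (hρ : 0 < ρ) (hσ : 0 < σ)
    (htrans : δ < ρ + δ * σ)
    (hzstar : 0 < zstar) (hk₀ : 0 < k₀) (hc₁ : 0 < c₁)
    (hA : δ - ρ - δ * σ ≠ 0)
    (h μ : ℝ → ℝ)
    (hh : ∀ t, h t =
      (a₂ * ((δ - ρ - δ * σ)/σ) * Real.exp (-((δ - ρ - δ * σ)/σ) * t) - δ) /
        ((δ - ρ - δ * σ)/σ) * (zstar * k₀ * Real.exp (-((ρ - δ)/σ) * t)))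
    (hμ : ∀ t, μ t = c₁ * Real.exp ((ρ - δ) * t)) :
    Tendsto (fun t => Real.exp (-ρ * t) * μ t * h t) atTop (nhds 0) ↔ a₂ = 0 := by
  set A : ℝ := (δ - ρ - δ * σ)/σ with hAdef
  have hσ' : σ ≠ 0 := ne_of_gt hσ
  have hAne : A ≠ 0 := div_ne_zero hA hσ'
  have hAneg : A < 0 := div_neg_of_neg_of_pos (by linarith) hσ
  set C : ℝ := c₁ * zstar * k₀ with hCdef
  have hCpos : 0 < C := by positivity
  have hft : ∀ t, Real.exp (-ρ * t) * μ t * h t = C * a₂ - C * δ / A * Real.exp (A * t) := by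
    intro t
    rw [hh, hμ]
    have e1 : Real.exp (-ρ * t) * Real.exp ((ρ - δ) * t) * Real.exp (-((ρ - δ)/σ) * t)
        = Real.exp (A * t) := by
      rw [← Real.exp_add, ← Real.exp_add]
      congr 1
      field_simp [hAdef]
      have hσA : σ * A = δ - ρ - δ * σ := by rw [hAdef]; field_simp
      linear_combination (-t) * hσA
    have e2 : Real.exp (-A * t) * Real.exp (A * t) = 1 := by
      rw [← Real.exp_add]; simp [neg_mul]
    have expand : Real.exp (-ρ * t) * (c₁ * Real.exp ((ρ - δ) * t)) *
        ((a₂ * A * Real.exp (-A * t) - δ) / A * (zstar * k₀ * Real.exp (-((ρ - δ)/σ) * t)))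
        = C * ((a₂ * A * (Real.exp (-A * t) * Real.exp (A * t)) - δ * Real.exp (A * t)) / A) := by
      rw [← e1]; field_simp; ring
    rw [expand, e2]
    field_simp
  have hlim : Tendsto (fun t => Real.exp (-ρ * t) * μ t * h t) atTop (nhds (C * a₂)) := by
    have h1 : Tendsto (fun t : ℝ => A * t) atTop atBot :=
      Tendsto.const_mul_atTop_of_neg hAneg tendsto_id
    have h2 : Tendsto (fun t : ℝ => Real.exp (A * t)) atTop (nhds 0) :=
      Real.tendsto_exp_atBot.comp h1
    have h3 : Tendsto (fun t : ℝ => C * a₂ - C * δ / A * Real.exp (A * t)) atTop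
        (nhds (C * a₂ - C * δ / A * 0)) := (h2.const_mul _).const_sub _
    rw [mul_zero, sub_zero] at h3
    exact h3.congr (fun t => (hft t).symm)
  constructor
  · intro htend
    have := tendsto_nhds_unique htend hlim
    have hCa : C * a₂ = 0 := this.symm
    rcases mul_eq_zero.mp hCa with h' | h'
    · exact absurd h' (ne_of_gt hCpos)
    · exact h'
  · intro ha
    subst ha
    simpa using hlim
end

section
/- Let I₁(t) = ((1-β)γ/δ) c(t)^(-σ) k(t)^β u(t)^(-β) h(t)^(-β) e^(-(ρ-δ)t). If c, k, u, h are positive differentiable functions satisfying c'/c = (βγ/σ)u^(1-β)k^(β-1)h^(1-β) - (ρ+π)/σ, k' = γk^β u^(1-β)h^(1-β) - πk - c, h' = δ(1-u)h, and u'/u = (δ+π)(1-β)/β - c/k + δu, then I₁ is constant in t. -/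
open Real

/-- I₁ is a first integral of the Lucas-Uzawa system. -/
theorem stmt16 (β γ δ σ ρ pr : ℝ)
    (hβ : 0 < β) (hβ1 : β < 1) (hγ : 0 < γ) (hδ : 0 < δ) (hσ : 0 < σ)
    (c k u h : ℝ → ℝ)
    (hcpos : ∀ t, 0 < c t) (hkpos : ∀ t, 0 < k t)
    (hupos : ∀ t, 0 < u t) (hhpos : ∀ t, 0 < h t)
    (hc : ∀ t, HasDerivAt c
      ((β * γ / σ * (u t) ^ (1 - β) * (k t) ^ (β - 1) * (h t) ^ (1 - β)
        - (ρ + pr)/σ) * c t) t)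
    (hk : ∀ t, HasDerivAt k
      (γ * (k t) ^ β * (u t) ^ (1 - β) * (h t) ^ (1 - β) - pr * k t - c t) t)
    (hh : ∀ t, HasDerivAt h (δ * (1 - u t) * h t) t)
    (hu : ∀ t, HasDerivAt u
      (((δ + pr) * (1 - β)/β - c t / k t + δ * u t) * u t) t) :
    ∀ t₁ t₂ : ℝ,
      ((1 - β) * γ / δ) * (c t₁) ^ (-σ) * (k t₁) ^ β * (u t₁) ^ (-β) * (h t₁) ^ (-β) *
          Real.exp (-(ρ - δ) * t₁)
        = ((1 - β) * γ / δ) * (c t₂) ^ (-σ) * (k t₂) ^ β * (u t₂) ^ (-β) * (h t₂) ^ (-β) *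
          Real.exp (-(ρ - δ) * t₂) := by
  have key : ∀ t, HasDerivAt (fun t => ((1 - β) * γ / δ) * (c t) ^ (-σ) * (k t) ^ β *
      (u t) ^ (-β) * (h t) ^ (-β) * Real.exp (-(ρ - δ) * t)) 0 t := by
    intro t
    have hc0 := (hcpos t).ne'
    have hk0 := (hkpos t).ne'
    have hu0 := (hupos t).ne'
    have hh0 := (hhpos t).ne'
    have H := ((((((hc t).rpow_const (p := -σ) (Or.inl hc0)).const_mul ((1 - β) * γ / δ)).mul
      ((hk t).rpow_const (p := β) (Or.inl hk0))).mul
      ((hu t).rpow_const (p := -β) (Or.inl hu0))).mul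
      ((hh t).rpow_const (p := -β) (Or.inl hh0))).mul
      (((hasDerivAt_id t).const_mul (-(ρ - δ))).exp)
    convert H using 1
    case e'_4 => rfl
    case e'_5 => rfl
    case e'_8 => rfl
    have e1 : (c t) ^ (-σ - 1) = (c t) ^ (-σ) / c t := by
      rw [Real.rpow_sub (hcpos t), Real.rpow_one]
    have e2 : (k t) ^ (β - 1) = (k t) ^ β / k t := by
      rw [Real.rpow_sub (hkpos t), Real.rpow_one]
    have e3 : (u t) ^ (-β - 1) = (u t) ^ (-β) / u t := by
      rw [Real.rpow_sub (hupos t), Real.rpow_one]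
    have e4 : (h t) ^ (-β - 1) = (h t) ^ (-β) / h t := by
      rw [Real.rpow_sub (hhpos t), Real.rpow_one]
    simp only [Pi.mul_apply, id]
    rw [e1, e2, e3, e4]
    field_simp
    ring
  intro t₁ t₂
  have := fun t => (key t).deriv
  have hconst := is_const_of_deriv_eq_zero (fun t => (key t).differentiableAt) (fun t => (key t).deriv) t₁ t₂
  simpa using hconst
end

section
/- Let z = hu/k where c, k, u, h are positive differentiable functions satisfying the Lucas-Uzawa system: c'/c = (βγ/σ)z^(1-β) - (ρ+π)/σ, k'/k = γz^(1-β) - π - c/k, h'/h = δ(1-u), u'/u = (δ+π)(1-β)/β - c/k + δu. Then z satisfies the autonomous ODE z'(t) = ((δ+π)/β) z(t) - γ z(t)^(2-β), i.e., z'/z = (δ+π)/β - γ z^(1-β). -/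
open Real

/-- z = hu/k satisfies the autonomous Bernoulli ODE
z' = ((δ+pr)/β) z - γ z^(2-β). -/
theorem stmt17 (β γ δ σ ρ pr : ℝ)
    (hβ : 0 < β) (hβ1 : β < 1) (hγ : 0 < γ) (hδ : 0 < δ) (hσ : 0 < σ)
    (c k u h : ℝ → ℝ)
    (hcpos : ∀ t, 0 < c t) (hkpos : ∀ t, 0 < k t)
    (hupos : ∀ t, 0 < u t) (hhpos : ∀ t, 0 < h t)
    (hc : ∀ t, HasDerivAt c
      ((β * γ / σ * (h t * u t / k t) ^ (1 - β) - (ρ + pr)/σ) * c t) t)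
    (hk : ∀ t, HasDerivAt k
      ((γ * (h t * u t / k t) ^ (1 - β) - pr - c t / k t) * k t) t)
    (hh : ∀ t, HasDerivAt h (δ * (1 - u t) * h t) t)
    (hu : ∀ t, HasDerivAt u
      (((δ + pr) * (1 - β)/β - c t / k t + δ * u t) * u t) t) :
    ∀ t, HasDerivAt (fun s => h s * u s / k s)
      (((δ + pr)/β) * (h t * u t / k t) - γ * (h t * u t / k t) ^ (2 - β)) t := by
  intro t
  have hk0 : k t ≠ 0 := (hkpos t).ne'
  have hz : (0:ℝ) < h t * u t / k t :=
    div_pos (mul_pos (hhpos t) (hupos t)) (hkpos t)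
  have hrw : (h t * u t / k t) ^ (2 - β)
      = (h t * u t / k t) ^ (1 - β) * (h t * u t / k t) := by
    rw [show (2:ℝ) - β = (1 - β) + 1 by ring, rpow_add hz, rpow_one]
  have hd := (((hh t).mul (hu t)).div (hk t) hk0)
  refine hd.congr_deriv ?_
  simp only [Pi.mul_apply]
  rw [hrw]
  set A := (h t * u t / k t) ^ (1 - β) with hA
  field_simp
  ring
end
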